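/- arXiv:2603.14481 — 2 statements merged into one kernel-verified Lean document; each statement's English description precedes it below -/
import Mathlib

section
/- (Robbins–Siegmund) Let (z_t), (f_t), (g_t), (h_t) be nonnegative stochastic processes adapted to a filtration (F_t) with z_t, f_t, g_t, h_t integrable, satisfying E[z_{t+1} | F_t] ≤ (1 + f_t) z_t + g_t − h_t almost surely for all t. If ∑_t f_t < ∞ and ∑_t g_t < ∞ almost surely, then almost surely lim_{t→∞} z_t exists (and is finite) and ∑_t h_t < ∞. -/
open MeasureTheory Filter Set

namespace RS16

variable {Ω : Type*}

/-- Discount factor. -/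
noncomputable def Ap (f : ℕ → Ω → ℝ) (t : ℕ) (ω : Ω) : ℝ :=
  ∏ s ∈ Finset.range t, (1 + f s ω)⁻¹

/-- Discounted partial sums. -/
noncomputable def Gs (f g : ℕ → Ω → ℝ) (t : ℕ) (ω : Ω) : ℝ :=
  ∑ s ∈ Finset.range t, Ap f (s + 1) ω * g s ω

/-- The supermartingale. -/
noncomputable def Xp (f g h z : ℕ → Ω → ℝ) (t : ℕ) (ω : Ω) : ℝ :=
  Ap f t ω * z t ω + Gs f h t ω - Gs f g t ω

/-- The stopped supermartingale. -/
noncomputable def Yp (f g h z : ℕ → Ω → ℝ) (n : ℕ) : ℕ → Ω → ℝ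
  | 0 => Xp f g h z 0
  | t + 1 => fun ω => Yp f g h z n t ω +
      Set.indicator {ω' | Gs f g (t + 1) ω' ≤ (n : ℝ)}
        (fun ω' => Xp f g h z (t + 1) ω' - Xp f g h z t ω') ω

section Pointwise

variable {f g h z : ℕ → Ω → ℝ} {ω : Ω} {t : ℕ}

lemma one_add_pos (hf : ∀ s, 0 ≤ f s ω) (s : ℕ) : (0:ℝ) < 1 + f s ω := by
  have := hf s; linarith

lemma Ap_pos (hf : ∀ s, 0 ≤ f s ω) : 0 < Ap f t ω :=
  Finset.prod_pos fun s _ => inv_pos.2 (one_add_pos hf s)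

lemma Ap_le_one (hf : ∀ s, 0 ≤ f s ω) : Ap f t ω ≤ 1 := by
  refine Finset.prod_le_one (fun s _ => (inv_pos.2 (one_add_pos hf s)).le) (fun s _ => ?_)
  rw [inv_le_one_iff₀]; right; have := hf s; linarith

lemma Ap_succ : Ap f (t + 1) ω = Ap f t ω * (1 + f t ω)⁻¹ := Finset.prod_range_succ _ _

lemma Ap_mul (hf : ∀ s, 0 ≤ f s ω) : Ap f (t + 1) ω * (1 + f t ω) = Ap f t ω := by
  rw [Ap_succ, mul_assoc, inv_mul_cancel₀ (one_add_pos hf t).ne', mul_one]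

lemma Ap_antitone (hf : ∀ s, 0 ≤ f s ω) : Antitone fun t => Ap f t ω := by
  refine antitone_nat_of_succ_le fun t => ?_
  rw [Ap_succ]
  calc Ap f t ω * (1 + f t ω)⁻¹ ≤ Ap f t ω * 1 := by
        refine mul_le_mul_of_nonneg_left ?_ (Ap_pos hf).le
        rw [inv_le_one_iff₀]; right; have := hf t; linarith
    _ = Ap f t ω := mul_one _

lemma Ap_ge (hf : ∀ s, 0 ≤ f s ω) (hsum : Summable fun s => f s ω) :
    Real.exp (-∑' s, f s ω) ≤ Ap f t ω := by
  have hprod : ∏ s ∈ Finset.range t, (1 + f s ω) ≤ Real.exp (∑' s, f s ω) := by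
    calc ∏ s ∈ Finset.range t, (1 + f s ω)
        ≤ ∏ s ∈ Finset.range t, Real.exp (f s ω) :=
          Finset.prod_le_prod (fun s _ => by have := hf s; linarith)
            (fun s _ => by have := Real.add_one_le_exp (f s ω); linarith)
      _ = Real.exp (∑ s ∈ Finset.range t, f s ω) := (Real.exp_sum _ _).symm
      _ ≤ Real.exp (∑' s, f s ω) :=
          Real.exp_le_exp.2 (Summable.sum_le_tsum _ (fun s _ => hf s) hsum)
  have h1 : Ap f t ω = (∏ s ∈ Finset.range t, (1 + f s ω))⁻¹ := by
    rw [Ap, ← Finset.prod_inv_distrib]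
  rw [h1, Real.exp_neg]
  exact inv_anti₀ (Finset.prod_pos fun s _ => one_add_pos hf s) hprod

lemma Gs_succ : Gs f g (t + 1) ω = Gs f g t ω + Ap f (t + 1) ω * g t ω :=
  Finset.sum_range_succ _ _

lemma Gs_nonneg (hf : ∀ s, 0 ≤ f s ω) (hg : ∀ s, 0 ≤ g s ω) : 0 ≤ Gs f g t ω :=
  Finset.sum_nonneg fun s _ => mul_nonneg (Ap_pos hf).le (hg s)

lemma Gs_mono (hf : ∀ s, 0 ≤ f s ω) (hg : ∀ s, 0 ≤ g s ω) :
    Monotone fun t => Gs f g t ω := by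
  refine monotone_nat_of_le_succ fun t => ?_
  rw [Gs_succ]
  have : 0 ≤ Ap f (t + 1) ω * g t ω := mul_nonneg (Ap_pos hf).le (hg t)
  linarith

lemma Gs_le_tsum (hf : ∀ s, 0 ≤ f s ω) (hg : ∀ s, 0 ≤ g s ω)
    (hsum : Summable fun s => g s ω) : Gs f g t ω ≤ ∑' s, g s ω := by
  calc Gs f g t ω ≤ ∑ s ∈ Finset.range t, g s ω := by
        refine Finset.sum_le_sum fun s _ => ?_
        calc Ap f (s + 1) ω * g s ω ≤ 1 * g s ω :=
              mul_le_mul_of_nonneg_right (Ap_le_one hf) (hg s)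
          _ = g s ω := one_mul _
    _ ≤ ∑' s, g s ω := Summable.sum_le_tsum _ (fun s _ => hg s) hsum

lemma Xp_zero : Xp f g h z 0 ω = z 0 ω := by
  simp [Xp, Ap, Gs]

lemma Xp_ge (hf : ∀ s, 0 ≤ f s ω) (hh : ∀ s, 0 ≤ h s ω) (hz : ∀ s, 0 ≤ z s ω) :
    -Gs f g t ω ≤ Xp f g h z t ω := by
  have h1 : 0 ≤ Ap f t ω * z t ω := mul_nonneg (Ap_pos hf).le (hz t)
  have h2 : 0 ≤ Gs f h t ω := Gs_nonneg hf hh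
  rw [Xp]; linarith

/-- Invariant for the stopped process. -/
lemma Yp_invariant (hf : ∀ s, 0 ≤ f s ω) (hg : ∀ s, 0 ≤ g s ω)
    (hh : ∀ s, 0 ≤ h s ω) (hz : ∀ s, 0 ≤ z s ω) (n : ℕ) :
    ∀ t, (Gs f g t ω ≤ n → Yp f g h z n t ω = Xp f g h z t ω) ∧
      -(n : ℝ) ≤ Yp f g h z n t ω := by
  intro t
  induction t with
  | zero =>
    constructor
    · intro _; rfl
    · show -(n:ℝ) ≤ Xp f g h z 0 ω
      rw [Xp_zero]
      have := hz 0
      have : (0:ℝ) ≤ n := Nat.cast_nonneg n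
      linarith [hz 0]
  | succ t ih =>
    by_cases hmem : Gs f g (t + 1) ω ≤ (n : ℝ)
    · have hGt : Gs f g t ω ≤ (n : ℝ) := le_trans (Gs_mono hf hg (Nat.le_succ t)) hmem
      have hYt := ih.1 hGt
      have hY : Yp f g h z n (t + 1) ω = Xp f g h z (t + 1) ω := by
        show Yp f g h z n t ω + _ = _
        rw [Set.indicator_of_mem (show ω ∈ {ω' | Gs f g (t+1) ω' ≤ (n:ℝ)} from hmem), hYt]; ring
      refine ⟨fun _ => hY, ?_⟩
      rw [hY]
      calc -(n:ℝ) ≤ -Gs f g (t+1) ω := by linarith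
        _ ≤ Xp f g h z (t+1) ω := Xp_ge hf hh hz
    · have hY : Yp f g h z n (t + 1) ω = Yp f g h z n t ω := by
        show Yp f g h z n t ω + _ = _
        rw [Set.indicator_of_notMem (show ω ∉ {ω' | Gs f g (t+1) ω' ≤ (n:ℝ)} from hmem)]; ring
      exact ⟨fun hc => absurd hc hmem, by rw [hY]; exact ih.2⟩

lemma Yp_eq_Xp (hf : ∀ s, 0 ≤ f s ω) (hg : ∀ s, 0 ≤ g s ω)
    (hh : ∀ s, 0 ≤ h s ω) (hz : ∀ s, 0 ≤ z s ω) {n : ℕ}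
    (hb : ∀ t, Gs f g t ω ≤ (n : ℝ)) (t : ℕ) :
    Yp f g h z n t ω = Xp f g h z t ω :=
  (Yp_invariant hf hg hh hz n t).1 (hb t)


lemma pointwise_conclusion (hf : ∀ s, 0 ≤ f s ω) (hg : ∀ s, 0 ≤ g s ω)
    (hh : ∀ s, 0 ≤ h s ω) (hz : ∀ s, 0 ≤ z s ω)
    (hfs : Summable fun s => f s ω) (hgs : Summable fun s => g s ω)
    (hX : ∃ c, Tendsto (fun t => Xp f g h z t ω) atTop (nhds c)) :
    (∃ L, Tendsto (fun t => z t ω) atTop (nhds L)) ∧ Summable (fun s => h s ω) := by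
  obtain ⟨c, hXc⟩ := hX
  set ε : ℝ := Real.exp (-∑' s, f s ω) with hεdef
  have hε : 0 < ε := Real.exp_pos _
  have hAlow : ∀ t, ε ≤ Ap f t ω := fun t => Ap_ge hf hfs
  have hAbdd : BddBelow (Set.range fun t => Ap f t ω) := by
    refine ⟨ε, ?_⟩; rintro x ⟨t, rfl⟩; exact hAlow t
  have hA : Tendsto (fun t => Ap f t ω) atTop (nhds (⨅ t, Ap f t ω)) :=
    tendsto_atTop_ciInf (Ap_antitone hf) hAbdd
  have hAinf_pos : 0 < ⨅ t, Ap f t ω := lt_of_lt_of_le hε (le_ciInf hAlow)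
  have hGbdd : BddAbove (Set.range fun t => Gs f g t ω) := by
    refine ⟨∑' s, g s ω, ?_⟩; rintro x ⟨t, rfl⟩; exact Gs_le_tsum hf hg hgs
  have hG : Tendsto (fun t => Gs f g t ω) atTop (nhds (⨆ t, Gs f g t ω)) :=
    tendsto_atTop_ciSup (Gs_mono hf hg) hGbdd
  obtain ⟨Cx, hCx⟩ := hXc.bddAbove_range
  have hHle : ∀ t, Gs f h t ω ≤ Cx + ∑' s, g s ω := by
    intro t
    have h1 : Xp f g h z t ω ≤ Cx := hCx (Set.mem_range_self t)
    have h2 : 0 ≤ Ap f t ω * z t ω := mul_nonneg (Ap_pos hf).le (hz t)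
    have h3 : Gs f g t ω ≤ ∑' s, g s ω := Gs_le_tsum hf hg hgs
    have h4 : Gs f h t ω = Xp f g h z t ω - Ap f t ω * z t ω + Gs f g t ω := by
      rw [Xp]; ring
    linarith
  have hHbdd : BddAbove (Set.range fun t => Gs f h t ω) := by
    refine ⟨Cx + ∑' s, g s ω, ?_⟩; rintro x ⟨t, rfl⟩; exact hHle t
  have hH : Tendsto (fun t => Gs f h t ω) atTop (nhds (⨆ t, Gs f h t ω)) :=
    tendsto_atTop_ciSup (Gs_mono hf hh) hHbdd
  have hAhs : Summable (fun s => Ap f (s + 1) ω * h s ω) := by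
    refine summable_of_sum_range_le (c := Cx + ∑' s, g s ω)
      (fun s => mul_nonneg (Ap_pos hf).le (hh s)) (fun t => ?_)
    exact hHle t
  have hhs : Summable (fun s => h s ω) := by
    refine Summable.of_nonneg_of_le hh (fun s => ?_) (hAhs.mul_left ε⁻¹)
    have h1 : ε * h s ω ≤ Ap f (s + 1) ω * h s ω :=
      mul_le_mul_of_nonneg_right (hAlow (s + 1)) (hh s)
    calc h s ω = ε⁻¹ * (ε * h s ω) := by
          rw [← mul_assoc, inv_mul_cancel₀ hε.ne', one_mul]
      _ ≤ ε⁻¹ * (Ap f (s + 1) ω * h s ω) :=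
          mul_le_mul_of_nonneg_left h1 (inv_nonneg.2 hε.le)
  refine ⟨?_, hhs⟩
  have hAz : Tendsto (fun t => Ap f t ω * z t ω) atTop
      (nhds (c - (⨆ t, Gs f h t ω) + (⨆ t, Gs f g t ω))) := by
    have heq : ∀ t, Xp f g h z t ω - Gs f h t ω + Gs f g t ω = Ap f t ω * z t ω := by
      intro t; rw [Xp]; ring
    exact Tendsto.congr heq ((hXc.sub hH).add hG)
  refine ⟨(⨅ t, Ap f t ω)⁻¹ * (c - (⨆ t, Gs f h t ω) + (⨆ t, Gs f g t ω)), ?_⟩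
  have heq : ∀ t, (Ap f t ω)⁻¹ * (Ap f t ω * z t ω) = z t ω := by
    intro t; rw [← mul_assoc, inv_mul_cancel₀ (Ap_pos hf).ne', one_mul]
  exact Tendsto.congr heq ((hA.inv₀ hAinf_pos.ne').mul hAz)

end Pointwise


section Measure

variable {mΩ : MeasurableSpace Ω} {μ : Measure Ω} [IsProbabilityMeasure μ]
  {ℱ : Filtration ℕ mΩ} {f g h z : ℕ → Ω → ℝ}

lemma Ap_meas (hf : Adapted ℱ f) {s t : ℕ} (hst : s ≤ t + 1) :
    Measurable[ℱ t] (Ap f s) := by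
  refine Finset.measurable_prod _ fun i hi => ?_
  have hi' : ℱ i ≤ ℱ t := ℱ.mono (by simp at hi; omega)
  exact (measurable_const.add ((hf i).mono hi' le_rfl)).inv

lemma Gs_meas (hf : Adapted ℱ f) (hg : Adapted ℱ g) {s t : ℕ} (hst : s ≤ t + 1) :
    Measurable[ℱ t] (Gs f g s) := by
  refine Finset.measurable_sum _ fun i hi => ?_
  have hi1 : i + 1 ≤ t + 1 := by simp at hi; omega
  have hi' : ℱ i ≤ ℱ t := ℱ.mono (by simp at hi; omega)
  exact (Ap_meas hf hi1).mul ((hg i).mono hi' le_rfl)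

lemma Xp_meas (hf : Adapted ℱ f) (hg : Adapted ℱ g) (hh : Adapted ℱ h)
    (hz : Adapted ℱ z) (t : ℕ) : Measurable[ℱ t] (Xp f g h z t) := by
  show Measurable[ℱ t] fun ω => Ap f t ω * z t ω + Gs f h t ω - Gs f g t ω
  exact (((Ap_meas hf t.le_succ).mul (hz t)).add
    (Gs_meas hf hh t.le_succ)).sub (Gs_meas hf hg t.le_succ)

lemma Ap_mul_int (hf : Adapted ℱ f) (hfnn : ∀ s ω, 0 ≤ f s ω) {s t : ℕ} (hst : s ≤ t + 1)
    (hint : Integrable (z t) μ) : Integrable (fun ω => Ap f s ω * z t ω) μ := by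
  refine hint.bdd_mul (((Ap_meas hf hst).mono (ℱ.le t) le_rfl).aestronglyMeasurable) (c := 1) (ae_of_all _ fun ω => ?_)
  rw [Real.norm_eq_abs, abs_of_nonneg (Ap_pos (fun i => hfnn i ω)).le]
  exact Ap_le_one (fun i => hfnn i ω)

lemma Gs_int (hf : Adapted ℱ f) (hfnn : ∀ s ω, 0 ≤ f s ω) (hg : Adapted ℱ g)
    (hgint : ∀ s, Integrable (g s) μ) (t : ℕ) : Integrable (Gs f g t) μ := by
  have : ∀ s ∈ Finset.range t, Integrable (fun ω => Ap f (s + 1) ω * g s ω) μ :=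
    fun s hs => Ap_mul_int hf hfnn (by simp at hs; omega) (hgint s)
  exact integrable_finset_sum _ this

lemma Xp_int (hf : Adapted ℱ f) (hfnn : ∀ s ω, 0 ≤ f s ω) (hg : Adapted ℱ g)
    (hh : Adapted ℱ h) (hz : Adapted ℱ z) (hgint : ∀ s, Integrable (g s) μ)
    (hhint : ∀ s, Integrable (h s) μ) (hzint : ∀ s, Integrable (z s) μ) (t : ℕ) :
    Integrable (Xp f g h z t) μ := by
  show Integrable (fun ω => Ap f t ω * z t ω + Gs f h t ω - Gs f g t ω) μ
  exact ((Ap_mul_int hf hfnn t.le_succ (hzint t)).add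
    (Gs_int hf hfnn hh hhint t)).sub (Gs_int hf hfnn hg hgint t)


lemma Xp_condexp (hf : Adapted ℱ f) (hfnn : ∀ s ω, 0 ≤ f s ω) (hg : Adapted ℱ g)
    (hh : Adapted ℱ h) (hz : Adapted ℱ z)
    (hgint : ∀ s, Integrable (g s) μ) (hhint : ∀ s, Integrable (h s) μ)
    (hzint : ∀ s, Integrable (z s) μ)
    (hrec : ∀ t, μ[z (t + 1) | ℱ t] ≤ᵐ[μ]
      fun ω => (1 + f t ω) * z t ω + g t ω - h t ω) (t : ℕ) :
    μ[Xp f g h z (t + 1) | ℱ t] ≤ᵐ[μ] Xp f g h z t := by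
  have hm := ℱ.le t
  have hAz_int : Integrable (fun ω => Ap f (t + 1) ω * z (t + 1) ω) μ :=
    Ap_mul_int hf hfnn (Nat.le_succ _) (hzint (t + 1))
  have htail_meas : Measurable[ℱ t] (fun ω => Gs f h (t + 1) ω - Gs f g (t + 1) ω) :=
    (Gs_meas hf hh le_rfl).sub (Gs_meas hf hg le_rfl)
  have htail_int : Integrable (fun ω => Gs f h (t + 1) ω - Gs f g (t + 1) ω) μ :=
    (Gs_int hf hfnn hh hhint (t + 1)).sub (Gs_int hf hfnn hg hgint (t + 1))
  have hdecomp : Xp f g h z (t + 1) = (fun ω => Ap f (t + 1) ω * z (t + 1) ω) +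
      fun ω => Gs f h (t + 1) ω - Gs f g (t + 1) ω := by
    funext ω; show Xp f g h z (t+1) ω = _; simp only [Xp, Pi.add_apply]; ring
  have h1 : μ[Xp f g h z (t + 1)|ℱ t] =ᵐ[μ]
      μ[fun ω => Ap f (t + 1) ω * z (t + 1) ω|ℱ t] +
        μ[fun ω => Gs f h (t + 1) ω - Gs f g (t + 1) ω|ℱ t] := by
    rw [hdecomp]; exact condExp_add hAz_int htail_int _
  have h2 : μ[fun ω => Ap f (t + 1) ω * z (t + 1) ω|ℱ t] =ᵐ[μ]
      fun ω => Ap f (t + 1) ω * (μ[z (t + 1)|ℱ t]) ω :=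
    condExp_mul_of_stronglyMeasurable_left ((Ap_meas hf le_rfl).stronglyMeasurable)
      hAz_int (hzint (t + 1))
  have h3 : μ[fun ω => Gs f h (t + 1) ω - Gs f g (t + 1) ω|ℱ t] =
      fun ω => Gs f h (t + 1) ω - Gs f g (t + 1) ω :=
    condExp_of_stronglyMeasurable hm htail_meas.stronglyMeasurable htail_int
  filter_upwards [h1, h2, hrec t] with ω e1 e2 le1
  have hApos : (0:ℝ) < Ap f (t + 1) ω := Ap_pos (fun s => hfnn s ω)
  have key : Ap f (t + 1) ω * ((1 + f t ω) * z t ω + g t ω - h t ω) +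
      (Gs f h (t + 1) ω - Gs f g (t + 1) ω) = Xp f g h z t ω := by
    rw [Gs_succ, Gs_succ, Xp, ← Ap_mul (fun s => hfnn s ω) (t := t)]; ring
  have e1' : (μ[Xp f g h z (t + 1)|ℱ t]) ω =
      (μ[fun ω => Ap f (t + 1) ω * z (t + 1) ω|ℱ t]) ω +
        (Gs f h (t + 1) ω - Gs f g (t + 1) ω) := by
    rw [e1]; simp only [Pi.add_apply]; rw [h3]
  rw [e1', e2]
  have hmul : Ap f (t + 1) ω * (μ[z (t + 1)|ℱ t]) ω ≤
      Ap f (t + 1) ω * ((1 + f t ω) * z t ω + g t ω - h t ω) :=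
    mul_le_mul_of_nonneg_left le1 hApos.le
  linarith


lemma hS_meas (hf : Adapted ℱ f) (hg : Adapted ℱ g) (n t : ℕ) :
    MeasurableSet[ℱ t] {ω' | Gs f g (t + 1) ω' ≤ (n : ℝ)} :=
  measurableSet_le (Gs_meas hf hg le_rfl) measurable_const

lemma Yp_meas (hf : Adapted ℱ f) (hg : Adapted ℱ g) (hh : Adapted ℱ h)
    (hz : Adapted ℱ z) (n : ℕ) : ∀ t, Measurable[ℱ t] (Yp f g h z n t) := by
  intro t
  induction t with
  | zero => exact Xp_meas hf hg hh hz 0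
  | succ t ih =>
    show Measurable[ℱ (t + 1)] fun ω => Yp f g h z n t ω + _
    refine (ih.mono (ℱ.mono t.le_succ) le_rfl).add (Measurable.indicator ?_ ?_)
    · exact (Xp_meas hf hg hh hz (t + 1)).sub
        ((Xp_meas hf hg hh hz t).mono (ℱ.mono t.le_succ) le_rfl)
    · exact ℱ.mono t.le_succ _ (hS_meas hf hg n t)

lemma Yp_int (hf : Adapted ℱ f) (hfnn : ∀ s ω, 0 ≤ f s ω) (hg : Adapted ℱ g)
    (hh : Adapted ℱ h) (hz : Adapted ℱ z) (hgint : ∀ s, Integrable (g s) μ)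
    (hhint : ∀ s, Integrable (h s) μ) (hzint : ∀ s, Integrable (z s) μ) (n : ℕ) :
    ∀ t, Integrable (Yp f g h z n t) μ := by
  intro t
  induction t with
  | zero => exact Xp_int hf hfnn hg hh hz hgint hhint hzint 0
  | succ t ih =>
    show Integrable (fun ω => Yp f g h z n t ω + _) μ
    exact ih.add (((Xp_int hf hfnn hg hh hz hgint hhint hzint (t + 1)).sub
      (Xp_int hf hfnn hg hh hz hgint hhint hzint t)).indicator
        (ℱ.le t _ (hS_meas hf hg n t)))

lemma Yp_supermartingale (hf : Adapted ℱ f) (hfnn : ∀ s ω, 0 ≤ f s ω) (hg : Adapted ℱ g)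
    (hh : Adapted ℱ h) (hz : Adapted ℱ z) (hgint : ∀ s, Integrable (g s) μ)
    (hhint : ∀ s, Integrable (h s) μ) (hzint : ∀ s, Integrable (z s) μ)
    (hrec : ∀ t, μ[z (t + 1) | ℱ t] ≤ᵐ[μ]
      fun ω => (1 + f t ω) * z t ω + g t ω - h t ω) (n : ℕ) :
    Supermartingale (Yp f g h z n) ℱ μ := by
  have hXint := Xp_int hf hfnn hg hh hz hgint hhint hzint
  have hYint := Yp_int hf hfnn hg hh hz hgint hhint hzint n
  refine supermartingale_nat (fun t => (Yp_meas hf hg hh hz n t).stronglyMeasurable)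
    hYint (fun t => ?_)
  have hm := ℱ.le t
  have hD_int : Integrable (fun ω => Xp f g h z (t + 1) ω - Xp f g h z t ω) μ :=
    (hXint (t + 1)).sub (hXint t)
  have hS := hS_meas (ℱ := ℱ) hf hg n t
  have hsplit : Yp f g h z n (t + 1) = Yp f g h z n t +
      Set.indicator {ω' | Gs f g (t + 1) ω' ≤ (n : ℝ)}
        (fun ω' => Xp f g h z (t + 1) ω' - Xp f g h z t ω') := rfl
  have h1 : μ[Yp f g h z n (t + 1)|ℱ t] =ᵐ[μ] μ[Yp f g h z n t|ℱ t] +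
      μ[Set.indicator {ω' | Gs f g (t + 1) ω' ≤ (n : ℝ)}
        (fun ω' => Xp f g h z (t + 1) ω' - Xp f g h z t ω')|ℱ t] := by
    rw [hsplit]
    exact condExp_add (hYint t) (hD_int.indicator (ℱ.le t _ hS)) _
  have h2 : μ[Yp f g h z n t|ℱ t] = Yp f g h z n t :=
    condExp_of_stronglyMeasurable hm (Yp_meas hf hg hh hz n t).stronglyMeasurable (hYint t)
  have h3 : μ[Set.indicator {ω' | Gs f g (t + 1) ω' ≤ (n : ℝ)}
        (fun ω' => Xp f g h z (t + 1) ω' - Xp f g h z t ω')|ℱ t] =ᵐ[μ]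
      Set.indicator {ω' | Gs f g (t + 1) ω' ≤ (n : ℝ)}
        (μ[fun ω' => Xp f g h z (t + 1) ω' - Xp f g h z t ω'|ℱ t]) :=
    condExp_indicator hD_int hS
  have h4 : μ[fun ω' => Xp f g h z (t + 1) ω' - Xp f g h z t ω'|ℱ t] =ᵐ[μ]
      μ[Xp f g h z (t + 1)|ℱ t] - Xp f g h z t := by
    have := condExp_sub (μ := μ) (m := ℱ t) (hXint (t + 1)) (hXint t)
    have h5 : μ[Xp f g h z t|ℱ t] = Xp f g h z t :=
      condExp_of_stronglyMeasurable hm (Xp_meas hf hg hh hz t).stronglyMeasurable (hXint t)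
    refine this.trans ?_
    rw [h5]
  have hXle := Xp_condexp hf hfnn hg hh hz hgint hhint hzint hrec t
  filter_upwards [h1, h3.mono (fun ω e => e), h4, hXle] with ω e1 e3 e4 e5
  rw [e1]
  simp only [Pi.add_apply, h2]
  have hind : Set.indicator {ω' | Gs f g (t + 1) ω' ≤ (n : ℝ)}
      (μ[fun ω' => Xp f g h z (t + 1) ω' - Xp f g h z t ω'|ℱ t]) ω ≤ 0 := by
    by_cases hmem : ω ∈ {ω' | Gs f g (t + 1) ω' ≤ (n : ℝ)}
    · rw [Set.indicator_of_mem hmem, e4]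
      simp only [Pi.sub_apply]
      linarith
    · rw [Set.indicator_of_notMem hmem]
  rw [e3]
  linarith


lemma Yp_tendsto (hf : Adapted ℱ f) (hfnn : ∀ s ω, 0 ≤ f s ω) (hg : Adapted ℱ g)
    (hgnn : ∀ s ω, 0 ≤ g s ω) (hh : Adapted ℱ h) (hhnn : ∀ s ω, 0 ≤ h s ω)
    (hz : Adapted ℱ z) (hznn : ∀ s ω, 0 ≤ z s ω)
    (hgint : ∀ s, Integrable (g s) μ) (hhint : ∀ s, Integrable (h s) μ)
    (hzint : ∀ s, Integrable (z s) μ)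
    (hrec : ∀ t, μ[z (t + 1) | ℱ t] ≤ᵐ[μ]
      fun ω => (1 + f t ω) * z t ω + g t ω - h t ω) (n : ℕ) :
    ∀ᵐ ω ∂μ, ∃ c, Tendsto (fun t => Yp f g h z n t ω) atTop (nhds c) := by
  have hYint := Yp_int hf hfnn hg hh hz hgint hhint hzint n
  have hsup := Yp_supermartingale hf hfnn hg hh hz hgint hhint hzint hrec n
  have hlow : ∀ t ω, -(n : ℝ) ≤ Yp f g h z n t ω := fun t ω =>
    (Yp_invariant (fun s => hfnn s ω) (fun s => hgnn s ω) (fun s => hhnn s ω)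
      (fun s => hznn s ω) n t).2
  set R : ℝ := ∫ ω, z 0 ω ∂μ + 2 * n with hR
  have hmean : ∀ t, ∫ ω, Yp f g h z n t ω ∂μ ≤ ∫ ω, z 0 ω ∂μ := by
    intro t
    have := hsup.setIntegral_le (Nat.zero_le t) (MeasurableSet.univ (α := Ω))
    simp only [setIntegral_univ] at this
    have h0 : Yp f g h z n 0 = z 0 := by
      funext ω; show Xp f g h z 0 ω = z 0 ω; exact Xp_zero
    rwa [h0] at this
  have habs : ∀ t, ∫ ω, |Yp f g h z n t ω| ∂μ ≤ R := by
    intro t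
    have hint := hYint t
    have hle : ∀ ω, |Yp f g h z n t ω| ≤ Yp f g h z n t ω + 2 * n := by
      intro ω
      rcases abs_cases (Yp f g h z n t ω) with ⟨he, _⟩ | ⟨he, _⟩
      · have : (0:ℝ) ≤ n := Nat.cast_nonneg n
        linarith
      · have := hlow t ω
        linarith
    calc ∫ ω, |Yp f g h z n t ω| ∂μ ≤ ∫ ω, (Yp f g h z n t ω + 2 * n) ∂μ :=
          integral_mono hint.abs (hint.add (integrable_const _)) hle
      _ = ∫ ω, Yp f g h z n t ω ∂μ + 2 * n := by
          rw [integral_add hint (integrable_const _), integral_const]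
          simp
      _ ≤ R := by have := hmean t; rw [hR]; linarith
  have hbdd : ∀ t, eLpNorm ((-Yp f g h z n) t) 1 μ ≤ ENNReal.ofReal R := by
    intro t
    have : (-Yp f g h z n) t = -(Yp f g h z n t) := rfl
    rw [this, eLpNorm_neg, eLpNorm_one_eq_lintegral_enorm,
      ← ofReal_integral_norm_eq_lintegral_enorm (hYint t)]
    exact ENNReal.ofReal_le_ofReal (by simpa [Real.norm_eq_abs] using habs t)
  have hconv := hsup.neg.exists_ae_tendsto_of_bdd hbdd
  filter_upwards [hconv] with ω ⟨c, hc⟩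
  refine ⟨-c, ?_⟩
  have : Tendsto (fun t => -((-Yp f g h z n) t ω)) atTop (nhds (-c)) := hc.neg
  simpa using this


end Measure

theorem aux {mΩ : MeasurableSpace Ω} {μ : Measure Ω} [IsProbabilityMeasure μ]
    (ℱ : Filtration ℕ mΩ) (z f g h : ℕ → Ω → ℝ)
    (hz : Adapted ℱ z) (hf : Adapted ℱ f) (hg : Adapted ℱ g) (hh : Adapted ℱ h)
    (hznn : ∀ t ω', 0 ≤ z t ω') (hfnn : ∀ t ω', 0 ≤ f t ω')
    (hgnn : ∀ t ω', 0 ≤ g t ω') (hhnn : ∀ t ω', 0 ≤ h t ω')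
    (hzint : ∀ t, Integrable (z t) μ)
    (hgint : ∀ t, Integrable (g t) μ) (hhint : ∀ t, Integrable (h t) μ)
    (hrec : ∀ t, μ[z (t + 1) | ℱ t] ≤ᵐ[μ]
      fun ω => (1 + f t ω) * z t ω + g t ω - h t ω)
    (hfsum : ∀ᵐ ω ∂μ, Summable (fun t => f t ω))
    (hgsum : ∀ᵐ ω ∂μ, Summable (fun t => g t ω)) :
    ∀ᵐ ω ∂μ, (∃ L : ℝ, Tendsto (fun t => z t ω) atTop (nhds L)) ∧
      Summable (fun t => h t ω) := by
  have hYall : ∀ᵐ ω ∂μ, ∀ n : ℕ, ∃ c, Tendsto (fun t => Yp f g h z n t ω) atTop (nhds c) :=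
    ae_all_iff.2 fun n => Yp_tendsto hf hfnn hg hgnn hh hhnn hz hznn hgint hhint hzint hrec n
  filter_upwards [hYall, hfsum, hgsum] with ω hYω hfω hgω
  have hfω' : ∀ s, 0 ≤ f s ω := fun s => hfnn s ω
  have hgω' : ∀ s, 0 ≤ g s ω := fun s => hgnn s ω
  have hhω' : ∀ s, 0 ≤ h s ω := fun s => hhnn s ω
  have hzω' : ∀ s, 0 ≤ z s ω := fun s => hznn s ω
  obtain ⟨n, hn⟩ := exists_nat_ge (∑' s, g s ω)
  have hb : ∀ t, Gs f g t ω ≤ (n : ℝ) := fun t => (Gs_le_tsum hfω' hgω' hgω).trans hn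
  obtain ⟨c, hc⟩ := hYω n
  have hXc : Tendsto (fun t => Xp f g h z t ω) atTop (nhds c) :=
    Tendsto.congr (fun t => Yp_eq_Xp hfω' hgω' hhω' hzω' hb t) hc
  exact pointwise_conclusion hfω' hgω' hhω' hzω' hfω hgω ⟨c, hXc⟩

end RS16

open RS16 in
theorem stmt_16 {Ω : Type*} {mΩ : MeasurableSpace Ω} {μ : Measure Ω}
    [IsProbabilityMeasure μ] (ℱ : Filtration ℕ mΩ)
    (z f g h : ℕ → Ω → ℝ)
    (hz : Adapted ℱ z) (hf : Adapted ℱ f) (hg : Adapted ℱ g) (hh : Adapted ℱ h)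
    (hznn : ∀ t, 0 ≤ᵐ[μ] z t) (hfnn : ∀ t, 0 ≤ᵐ[μ] f t)
    (hgnn : ∀ t, 0 ≤ᵐ[μ] g t) (hhnn : ∀ t, 0 ≤ᵐ[μ] h t)
    (hzint : ∀ t, Integrable (z t) μ) (hfint : ∀ t, Integrable (f t) μ)
    (hgint : ∀ t, Integrable (g t) μ) (hhint : ∀ t, Integrable (h t) μ)
    (hrec : ∀ t, μ[z (t + 1) | ℱ t] ≤ᵐ[μ]
      fun ω => (1 + f t ω) * z t ω + g t ω - h t ω)
    (hfsum : ∀ᵐ ω ∂μ, Summable (fun t => f t ω))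
    (hgsum : ∀ᵐ ω ∂μ, Summable (fun t => g t ω)) :
    ∀ᵐ ω ∂μ, (∃ L : ℝ, Tendsto (fun t => z t ω) atTop (nhds L)) ∧
      Summable (fun t => h t ω) := by
  set z' : ℕ → Ω → ℝ := fun t ω => max (z t ω) 0 with hz'def
  set f' : ℕ → Ω → ℝ := fun t ω => max (f t ω) 0 with hf'def
  set g' : ℕ → Ω → ℝ := fun t ω => max (g t ω) 0 with hg'def
  set h' : ℕ → Ω → ℝ := fun t ω => max (h t ω) 0 with hh'def
  have hez : ∀ t, z' t =ᵐ[μ] z t := fun t => (hznn t).mono fun ω hω => max_eq_left hω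
  have hef : ∀ t, f' t =ᵐ[μ] f t := fun t => (hfnn t).mono fun ω hω => max_eq_left hω
  have heg : ∀ t, g' t =ᵐ[μ] g t := fun t => (hgnn t).mono fun ω hω => max_eq_left hω
  have heh : ∀ t, h' t =ᵐ[μ] h t := fun t => (hhnn t).mono fun ω hω => max_eq_left hω
  have hrec' : ∀ t, μ[z' (t + 1) | ℱ t] ≤ᵐ[μ]
      fun ω => (1 + f' t ω) * z' t ω + g' t ω - h' t ω := by
    intro t
    have h1 : μ[z' (t + 1) | ℱ t] =ᵐ[μ] μ[z (t + 1) | ℱ t] := condExp_congr_ae (hez (t + 1))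
    filter_upwards [h1, hrec t, hez t, hef t, heg t, heh t] with ω e1 e2 e3 e4 e5 e6
    rw [e1, e3, e4, e5, e6]
    exact e2
  have key := aux ℱ z' f' g' h'
    (fun t => ((hz t).max measurable_const))
    (fun t => ((hf t).max measurable_const))
    (fun t => ((hg t).max measurable_const))
    (fun t => ((hh t).max measurable_const))
    (fun t ω => le_max_right _ _) (fun t ω => le_max_right _ _)
    (fun t ω => le_max_right _ _) (fun t ω => le_max_right _ _)
    (fun t => (hzint t).pos_part) (fun t => (hgint t).pos_part)
    (fun t => (hhint t).pos_part) hrec'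
    (by
      filter_upwards [hfsum, ae_all_iff.2 hef] with ω h1 h2
      exact h1.congr fun t => (h2 t).symm)
    (by
      filter_upwards [hgsum, ae_all_iff.2 heg] with ω h1 h2
      exact h1.congr fun t => (h2 t).symm)
  filter_upwards [key, ae_all_iff.2 hez, ae_all_iff.2 heh] with ω hω hzeq hheq
  obtain ⟨⟨L, hL⟩, hsum⟩ := hω
  exact ⟨⟨L, Tendsto.congr (fun t => hzeq t) hL⟩, hsum.congr fun t => hheq t⟩
end

section
/- Let (z_t), (f_t), (g_t), (a_t) be nonnegative sequences of reals (deterministic version) satisfying z_{t+1} ≤ (1 + f_t) z_t + g_t − a_t z_t for all t, with ∑ f_t < ∞, ∑ g_t < ∞, ∑ a_t = ∞. Suppose η ∈ (0,1) is such that there is T ≥ 1 with a_t ≥ η/t for all t ≥ T, ∑_{t≥1} (t+1)^η g_t < ∞, and ∑_{t≥1} (a_t − η/t) = ∞. Then t^η z_t → 0 as t → ∞. -/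
open Filter

/-- Deterministic Robbins–Siegmund lemma with divergent coefficient. -/
lemma RS_det (v f g α : ℕ → ℝ) (T : ℕ)
    (hv : ∀ t, 0 ≤ v t) (hf : ∀ t, 0 ≤ f t) (hg : ∀ t, 0 ≤ g t)
    (hα : ∀ t, T ≤ t → 0 ≤ α t)
    (hrec : ∀ t, T ≤ t → v (t + 1) ≤ (1 + f t) * v t + g t - α t * v t)
    (hfs : Summable f) (hgs : Summable g) (hαdiv : ¬ Summable α) :
    Tendsto v atTop (nhds 0) := by
  set S : ℝ := ∑' t, f t with hS
  set F : ℕ → ℝ := fun t => ∑ s ∈ Finset.range t, f s with hFdef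
  have hF0 : ∀ t, 0 ≤ F t := fun t => Finset.sum_nonneg fun s _ => hf s
  have hFS : ∀ t, F t ≤ S := fun t =>
    Summable.sum_le_tsum (Finset.range t) (fun s _ => hf s) hfs
  set u : ℕ → ℝ := fun t => v t * Real.exp (-(F t)) with hudef
  have hu0 : ∀ t, 0 ≤ u t := fun t => mul_nonneg (hv t) (Real.exp_pos _).le
  have huv : ∀ t, u t ≤ v t := by
    intro t
    have : Real.exp (-(F t)) ≤ 1 := Real.exp_le_one_iff.mpr (by linarith [hF0 t])
    calc u t = v t * Real.exp (-(F t)) := rfl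
      _ ≤ v t * 1 := mul_le_mul_of_nonneg_left this (hv t)
      _ = v t := mul_one _
  have hvu : ∀ t, v t ≤ Real.exp S * u t := by
    intro t
    have h1 : (1:ℝ) ≤ Real.exp S * Real.exp (-(F t)) := by
      rw [← Real.exp_add]
      exact Real.one_le_exp (by linarith [hFS t])
    calc v t = 1 * v t := (one_mul _).symm
      _ ≤ (Real.exp S * Real.exp (-(F t))) * v t :=
          mul_le_mul_of_nonneg_right h1 (hv t)
      _ = Real.exp S * u t := by rw [hudef]; ring
  -- key one-step inequality
  have key : ∀ t, T ≤ t → u (t + 1) ≤ u t + g t - Real.exp (-S) * (α t * v t) := by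
    intro t ht
    have hFsucc : F (t + 1) = F t + f t := Finset.sum_range_succ f t
    have e1 : Real.exp (-(F (t + 1))) = Real.exp (-(f t)) * Real.exp (-(F t)) := by
      rw [← Real.exp_add, hFsucc]; ring_nf
    have hA : (1 + f t) * Real.exp (-(f t)) ≤ 1 := by
      have h2 : f t + 1 ≤ Real.exp (f t) := Real.add_one_le_exp (f t)
      have h3 : (0:ℝ) < Real.exp (-(f t)) := Real.exp_pos _
      have h4 : (f t + 1) * Real.exp (-(f t)) ≤ Real.exp (f t) * Real.exp (-(f t)) :=
        mul_le_mul_of_nonneg_right h2 h3.le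
      have h5 : Real.exp (f t) * Real.exp (-(f t)) = 1 := by
        rw [← Real.exp_add]; simp
      linarith
    have hB : Real.exp (-(F (t + 1))) ≤ 1 :=
      Real.exp_le_one_iff.mpr (by linarith [hF0 (t + 1)])
    have hC : Real.exp (-S) ≤ Real.exp (-(F (t + 1))) :=
      Real.exp_le_exp.mpr (by linarith [hFS (t + 1)])
    have step1 : u (t + 1) ≤ ((1 + f t) * v t + g t - α t * v t) * Real.exp (-(F (t + 1))) :=
      mul_le_mul_of_nonneg_right (hrec t ht) (Real.exp_pos _).le
    have step2 : ((1 + f t) * v t + g t - α t * v t) * Real.exp (-(F (t + 1)))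
        = ((1 + f t) * Real.exp (-(f t))) * u t + g t * Real.exp (-(F (t + 1)))
          - (α t * v t) * Real.exp (-(F (t + 1))) := by
      rw [e1, hudef]; ring
    have h1 : ((1 + f t) * Real.exp (-(f t))) * u t ≤ 1 * u t :=
      mul_le_mul_of_nonneg_right hA (hu0 t)
    have h2 : g t * Real.exp (-(F (t + 1))) ≤ g t * 1 :=
      mul_le_mul_of_nonneg_left hB (hg t)
    have h3 : (α t * v t) * Real.exp (-S) ≤ (α t * v t) * Real.exp (-(F (t + 1))) :=
      mul_le_mul_of_nonneg_left hC (mul_nonneg (hα t ht) (hv t))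
    have := step1
    rw [step2] at this
    nlinarith
  -- shifted sequences
  set u' : ℕ → ℝ := fun n => u (n + T) with hu'def
  set v' : ℕ → ℝ := fun n => v (n + T) with hv'def
  set g' : ℕ → ℝ := fun n => g (n + T) with hg'def
  set α' : ℕ → ℝ := fun n => α (n + T) with hα'def
  have hg's : Summable g' := (summable_nat_add_iff T).2 hgs
  set G : ℝ := ∑' n, g' n with hG
  have hGsum : ∀ n, ∑ s ∈ Finset.range n, g' s ≤ G := fun n =>
    Summable.sum_le_tsum (Finset.range n) (fun s _ => hg (s + T)) hg's
  have key' : ∀ n, u' (n + 1) ≤ u' n + g' n - Real.exp (-S) * (α' n * v' n) := by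
    intro n
    have e : (n + 1) + T = (n + T) + 1 := by omega
    have := key (n + T) (Nat.le_add_left T n)
    simpa [hu'def, hg'def, hα'def, hv'def, e] using this
  -- partial sums bound
  have main : ∀ n, u' n + Real.exp (-S) * ∑ s ∈ Finset.range n, (α' s * v' s)
      ≤ u' 0 + ∑ s ∈ Finset.range n, g' s := by
    intro n
    induction n with
    | zero => simp
    | succ n ih =>
      rw [Finset.sum_range_succ, Finset.sum_range_succ, mul_add]
      have hk := key' n
      linarith
  have hαv0 : ∀ n, 0 ≤ α' n * v' n := fun n =>
    mul_nonneg (hα (n + T) (Nat.le_add_left T n)) (hv (n + T))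
  have sumbound : ∀ n, ∑ s ∈ Finset.range n, (α' s * v' s) ≤ Real.exp S * (u' 0 + G) := by
    intro n
    have h1 := main n
    have h2 := hGsum n
    have h3 := hu0 (n + T)
    have h4 : Real.exp (-S) * ∑ s ∈ Finset.range n, (α' s * v' s) ≤ u' 0 + G := by
      have : u' n = u (n + T) := rfl
      linarith [this ▸ h3]
    have h5 : Real.exp S * (Real.exp (-S) * ∑ s ∈ Finset.range n, (α' s * v' s))
        ≤ Real.exp S * (u' 0 + G) :=
      mul_le_mul_of_nonneg_left h4 (Real.exp_pos S).le
    have h6 : Real.exp S * (Real.exp (-S) * ∑ s ∈ Finset.range n, (α' s * v' s))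
        = ∑ s ∈ Finset.range n, (α' s * v' s) := by
      rw [← mul_assoc, ← Real.exp_add]; simp
    linarith [h6 ▸ h5]
  have hαvsum : Summable (fun n => α' n * v' n) :=
    summable_of_sum_range_le hαv0 sumbound
  -- u' converges
  set w : ℕ → ℝ := fun n => u' n - ∑ s ∈ Finset.range n, g' s with hwdef
  have hwanti : Antitone w := by
    apply antitone_nat_of_succ_le
    intro n
    have hk := key' n
    have h0 := mul_nonneg (Real.exp_pos (-S)).le (hαv0 n)
    simp only [hwdef, Finset.sum_range_succ]
    linarith
  have hwbdd : BddBelow (Set.range w) := by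
    refine ⟨-G, ?_⟩
    rintro x ⟨n, rfl⟩
    have h1 := hGsum n
    have h2 := hu0 (n + T)
    have : u' n = u (n + T) := rfl
    simp only [hwdef]
    linarith [this ▸ h2]
  have hwlim : Tendsto w atTop (nhds (⨅ n, w n)) := tendsto_atTop_ciInf hwanti hwbdd
  have hglim : Tendsto (fun n => ∑ s ∈ Finset.range n, g' s) atTop (nhds G) :=
    hg's.hasSum.tendsto_sum_nat
  set L : ℝ := (⨅ n, w n) + G with hL
  have hulim : Tendsto u' atTop (nhds L) := by
    have := hwlim.add hglim
    refine this.congr fun n => ?_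
    simp [hwdef]
  have hL0 : 0 ≤ L := ge_of_tendsto' hulim (fun n => hu0 (n + T))
  -- L = 0
  have hLzero : L = 0 := by
    by_contra hne
    have hLpos : 0 < L := lt_of_le_of_ne hL0 (Ne.symm hne)
    have hev : ∀ᶠ n in atTop, L / 2 < u' n :=
      hulim.eventually (eventually_gt_nhds (by linarith))
    obtain ⟨N, hN⟩ := hev.exists_forall_of_atTop
    have hvlb : ∀ n, N ≤ n → L / 2 ≤ v' n := by
      intro n hn
      have := hN n hn
      have h2 := huv (n + T)
      exact le_trans this.le h2
    have hsum1 : Summable (fun n => α' (n + N) * v' (n + N)) :=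
      (summable_nat_add_iff N).2 hαvsum
    have hsum2 : Summable (fun n => α' (n + N)) := by
      apply Summable.of_nonneg_of_le
        (fun n => hα (n + N + T) (Nat.le_add_left T _))
        (fun n => ?_) (hsum1.mul_left (2 / L))
      have hv2 : L / 2 ≤ v' (n + N) := hvlb (n + N) (Nat.le_add_left N n)
      have hα2 : 0 ≤ α' (n + N) := hα (n + N + T) (Nat.le_add_left T _)
      have : α' (n + N) * (L / 2) ≤ α' (n + N) * v' (n + N) :=
        mul_le_mul_of_nonneg_left hv2 hα2
      rw [div_mul_eq_mul_div, le_div_iff₀ hLpos]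
      nlinarith
    have : Summable α' := (summable_nat_add_iff N).1 hsum2
    exact hαdiv ((summable_nat_add_iff T).1 this)
  -- conclude
  rw [hLzero] at hulim
  have hv'lim : Tendsto v' atTop (nhds 0) := by
    have hexp : Tendsto (fun n => Real.exp S * u' n) atTop (nhds 0) := by
      have := hulim.const_mul (Real.exp S)
      simpa using this
    exact squeeze_zero (fun n => hv (n + T)) (fun n => hvu (n + T)) hexp
  exact (tendsto_add_atTop_iff_nat T).1 hv'lim

theorem stmt_17 (z f g a : ℕ → ℝ)
    (hznn : ∀ t, 0 ≤ z t) (hfnn : ∀ t, 0 ≤ f t)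
    (hgnn : ∀ t, 0 ≤ g t) (hann : ∀ t, 0 ≤ a t)
    (hrec : ∀ t, z (t + 1) ≤ (1 + f t) * z t + g t - a t * z t)
    (hfsum : Summable f) (hgsum : Summable g) (hadiv : ¬ Summable a)
    (η : ℝ) (hη : η ∈ Set.Ioo (0 : ℝ) 1)
    (T : ℕ) (hT : 1 ≤ T) (haη : ∀ t : ℕ, T ≤ t → η / t ≤ a t)
    (hgη : Summable (fun t : ℕ => ((t : ℝ) + 1) ^ η * g t))
    (hdiv : ¬ Summable (fun t : ℕ => a t - η / t)) :
    Tendsto (fun t : ℕ => (t : ℝ) ^ η * z t) atTop (nhds 0) := by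
  obtain ⟨hη0, hη1⟩ := hη
  set a' : ℕ → ℝ := fun t => min (a t) 1 with ha'def
  have ha'0 : ∀ t, 0 ≤ a' t := fun t => le_min (hann t) zero_le_one
  have ha'1 : ∀ t, a' t ≤ 1 := fun t => min_le_right _ _
  have ha'a : ∀ t, a' t ≤ a t := fun t => min_le_left _ _
  have hηt : ∀ t : ℕ, 1 ≤ t → η / t ≤ η := by
    intro t ht
    have h1 : (1:ℝ) ≤ (t:ℝ) := by exact_mod_cast ht
    rw [div_le_iff₀ (by linarith)]
    nlinarith
  have haη' : ∀ t : ℕ, T ≤ t → η / t ≤ a' t := by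
    intro t ht
    refine le_min (haη t ht) ?_
    exact le_trans (hηt t (le_trans hT ht)) hη1.le
  -- divergence for a'
  have hdiv' : ¬ Summable (fun t : ℕ => a' t - η / t) := by
    intro hs
    have h0 : Tendsto (fun t : ℕ => a' t - η / t) atTop (nhds 0) := hs.tendsto_atTop_zero
    have hev : ∀ᶠ t in atTop, a' t - η / t < 1 - η :=
      h0.eventually (eventually_lt_nhds (by linarith))
    obtain ⟨N, hN⟩ := hev.exists_forall_of_atTop
    set M := max N T with hM
    have heq : ∀ n : ℕ, a' (n + M) - η / ((n + M : ℕ) : ℝ) = a (n + M) - η / ((n + M : ℕ) : ℝ) := by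
      intro n
      have ht : T ≤ n + M := le_trans (le_max_right N T) (Nat.le_add_left M n)
      have htN : N ≤ n + M := le_trans (le_max_left N T) (Nat.le_add_left M n)
      have h1 := hN (n + M) htN
      have h2 := hηt (n + M) (le_trans hT ht)
      have h3 : a (n + M) ≤ 1 := by
        by_contra hc
        push_neg at hc
        have : a' (n + M) = 1 := min_eq_right hc.le
        rw [this] at h1
        linarith
      have : a' (n + M) = a (n + M) := min_eq_left h3
      rw [this]
    have hs2 : Summable (fun n : ℕ => a (n + M) - η / ((n + M : ℕ) : ℝ)) :=
      (((summable_nat_add_iff M).2 hs).congr heq)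
    exact hdiv ((summable_nat_add_iff M).1 hs2)
  -- setup for RS_det
  set v : ℕ → ℝ := fun t => (t : ℝ) ^ η * z t with hvdef
  set f2 : ℕ → ℝ := fun t => 2 * f t with hf2def
  set g2 : ℕ → ℝ := fun t : ℕ => ((t : ℝ) + 1) ^ η * g t with hg2def
  set α : ℕ → ℝ := fun t => (a' t - η / t) + (η / t) * a' t with hαdef
  set T' := max T 1 with hT'def
  have hvnn : ∀ t, 0 ≤ v t := fun t =>
    mul_nonneg (Real.rpow_nonneg (Nat.cast_nonneg t) η) (hznn t)
  have hf2nn : ∀ t, 0 ≤ f2 t := fun t => by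
    have := hfnn t; simp only [hf2def]; linarith
  have hg2nn : ∀ t, 0 ≤ g2 t := fun t =>
    mul_nonneg (Real.rpow_nonneg (by positivity) η) (hgnn t)
  have hαnn : ∀ t, T' ≤ t → 0 ≤ α t := by
    intro t ht
    have h1 : T ≤ t := le_trans (le_max_left T 1) ht
    have h2 := haη' t h1
    have h3 : (0:ℝ) ≤ η / t := div_nonneg hη0.le (Nat.cast_nonneg t)
    have h4 := ha'0 t
    simp only [hαdef]
    nlinarith
  have hαdiv : ¬ Summable α := by
    intro hs
    apply hdiv'
    have hs2 : Summable (fun n : ℕ => α (n + T')) := (summable_nat_add_iff T').2 hs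
    have hs3 : Summable (fun n : ℕ => a' (n + T') - η / ((n + T' : ℕ) : ℝ)) := by
      apply Summable.of_nonneg_of_le (fun n => ?_) (fun n => ?_) hs2
      · have := haη' (n + T') (le_trans (le_max_left T 1) (Nat.le_add_left T' n))
        linarith
      · have h3 : (0:ℝ) ≤ η / (n + T' : ℕ) := div_nonneg hη0.le (Nat.cast_nonneg _)
        have h4 := ha'0 (n + T')
        simp only [hαdef]
        nlinarith
    exact (summable_nat_add_iff T').1 hs3
  have hf2sum : Summable f2 := hfsum.mul_left 2
  have hrec2 : ∀ t, T' ≤ t → v (t + 1) ≤ (1 + f2 t) * v t + g2 t - α t * v t := by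
    intro t ht
    have htT : T ≤ t := le_trans (le_max_left T 1) ht
    have ht1 : 1 ≤ t := le_trans (le_max_right T 1) ht
    have htR : (1:ℝ) ≤ (t:ℝ) := by exact_mod_cast ht1
    have htpos : (0:ℝ) < (t:ℝ) := by linarith
    have hz1 : z (t + 1) ≤ (1 + f t - a' t) * z t + g t := by
      have h1 := hrec t
      have h2 : a' t * z t ≤ a t * z t :=
        mul_le_mul_of_nonneg_right (ha'a t) (hznn t)
      linarith
    have hc0 : 0 ≤ 1 + f t - a' t := by
      have := ha'1 t; have := hfnn t; linarith
    have hcast : ((t + 1 : ℕ) : ℝ) = (t:ℝ) + 1 := by push_cast; ring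
    have hrp : (0:ℝ) ≤ ((t:ℝ) + 1) ^ η := Real.rpow_nonneg (by linarith) η
    have step1 : v (t + 1) ≤ ((t:ℝ) + 1) ^ η * ((1 + f t - a' t) * z t + g t) := by
      have := mul_le_mul_of_nonneg_left hz1 hrp
      simpa [hvdef, hcast] using this
    -- Bernoulli bound
    have hbern : ((t:ℝ) + 1) ^ η ≤ (t:ℝ) ^ η * (1 + η / t) := by
      have hsplit : (t:ℝ) + 1 = (t:ℝ) * (1 + 1 / t) := by
        field_simp
      have hmul : ((t:ℝ) * (1 + 1 / t)) ^ η = (t:ℝ) ^ η * (1 + 1 / t) ^ η :=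
        Real.mul_rpow htpos.le (by positivity)
      have hb : (1 + 1 / (t:ℝ)) ^ η ≤ 1 + η * (1 / t) := by
        have h1t : (-1:ℝ) ≤ 1 / t := by
          have : (0:ℝ) ≤ 1 / t := by positivity
          linarith
        exact rpow_one_add_le_one_add_mul_self h1t hη0.le hη1.le
      have hb2 : (1 + 1 / (t:ℝ)) ^ η ≤ 1 + η / t := by
        rw [mul_one_div] at hb; exact hb
      calc ((t:ℝ) + 1) ^ η = (t:ℝ) ^ η * (1 + 1 / t) ^ η := by rw [hsplit, hmul]
        _ ≤ (t:ℝ) ^ η * (1 + η / t) :=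
            mul_le_mul_of_nonneg_left hb2 (Real.rpow_nonneg htpos.le η)
    have step2 : ((t:ℝ) + 1) ^ η * ((1 + f t - a' t) * z t) ≤
        (1 + η / t) * (1 + f t - a' t) * v t := by
      have hcz : 0 ≤ (1 + f t - a' t) * z t := mul_nonneg hc0 (hznn t)
      calc ((t:ℝ) + 1) ^ η * ((1 + f t - a' t) * z t)
          ≤ ((t:ℝ) ^ η * (1 + η / t)) * ((1 + f t - a' t) * z t) :=
            mul_le_mul_of_nonneg_right hbern hcz
        _ = (1 + η / t) * (1 + f t - a' t) * v t := by rw [hvdef]; ring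
    have step3 : (1 + η / t) * (1 + f t - a' t) * v t ≤ (1 + f2 t - α t) * v t := by
      apply mul_le_mul_of_nonneg_right _ (hvnn t)
      have h2 := hηt t ht1
      have h3 : (0:ℝ) ≤ η / t := div_nonneg hη0.le htpos.le
      have h4 := hfnn t
      simp only [hαdef, hf2def]
      nlinarith
    have := step1
    have hexp : ((t:ℝ) + 1) ^ η * ((1 + f t - a' t) * z t + g t)
        = ((t:ℝ) + 1) ^ η * ((1 + f t - a' t) * z t) + g2 t := by
      simp only [hg2def]; ring
    rw [hexp] at this
    have final : v (t + 1) ≤ (1 + f2 t - α t) * v t + g2 t :=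
      le_trans this (add_le_add_left (le_trans step2 step3) _)
    have hring : (1 + f2 t - α t) * v t + g2 t
        = (1 + f2 t) * v t + g2 t - α t * v t := by ring
    linarith [final, hring.le]
  have := RS_det v f2 g2 α T' hvnn hf2nn hg2nn hαnn hrec2 hf2sum hgη hαdiv
  exact this
end
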